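/- Suppose (A*, B*, C*, D*) is an Mn-dimensional state-space model such that S_l^i · Ȟ*(i+j) · S_m^j is block diagonal for all i, j ≥ 0 (where Ȟ*(0) = D*, Ȟ*(i) = C* A*^{i-1} B* for i ≥ 1), and suppose T^{-1} := Σ_{j=1}^{n} F̌_j S_l^{j-1} C* A*^{j-1} is invertible and Y := Σ_{j=0}^{n-1} T^{-1} A*^{j} B* S_m^{j+1} Ǧ_j is invertible, where F̌_j ∈ R^{Mn×Ml} and Ǧ_j ∈ R^{Mm×Mn} are block diagonal matrices (with repeated blocks F_j ∈ R^{n×l} and G_j ∈ R^{m×n}). Then T^{-1} A* T is a cyclic matrix, T^{-1} B* is a cyclic matrix, C* T is block diagonal, and D* is block diagonal. -/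

import Mathlib

open Matrix

/-- Block cyclic shift matrix: block (i, i+1 mod M) equals I_q, zeros elsewhere. -/
def cycShift (M q : ℕ) [NeZero M] : Matrix (Fin M × Fin q) (Fin M × Fin q) ℝ :=
  fun a b => if b.1 = a.1 + 1 ∧ b.2 = a.2 then 1 else 0

/-- Block diagonal: all off-diagonal p×q blocks vanish. -/
def IsBlockDiag {M p q : ℕ} (K : Matrix (Fin M × Fin p) (Fin M × Fin q) ℝ) : Prop :=
  ∀ i j : Fin M, i ≠ j → ∀ s t, K (i, s) (j, t) = 0

/-- Cyclic: the only possibly nonzero blocks are at positions ((j+1) mod M, j). -/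
def IsCyclicMat {M p q : ℕ} [NeZero M] (K : Matrix (Fin M × Fin p) (Fin M × Fin q) ℝ) : Prop :=
  ∀ i j : Fin M, i ≠ j + 1 → ∀ s t, K (i, s) (j, t) = 0

/-- Cyclic matrix built from blocks `Bs j` placed at positions ((j+1) mod M, j). -/
def cycOf {M p q : ℕ} [NeZero M] (Bs : Fin M → Matrix (Fin p) (Fin q) ℝ) :
    Matrix (Fin M × Fin p) (Fin M × Fin q) ℝ :=
  fun a b => if a.1 = b.1 + 1 then Bs b.1 a.2 b.2 else 0

/-- Block diagonal matrix built from diagonal blocks `Ds j`. -/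
def bdiagOf {M p q : ℕ} (Ds : Fin M → Matrix (Fin p) (Fin q) ℝ) :
    Matrix (Fin M × Fin p) (Fin M × Fin q) ℝ :=
  fun a b => if a.1 = b.1 then Ds b.1 a.2 b.2 else 0

/-- Markov parameters of a state-space model (A*, B*, C*, D*). -/
noncomputable def markovSS {M n m l : ℕ}
    (Astar : Matrix (Fin M × Fin n) (Fin M × Fin n) ℝ)
    (Bstar : Matrix (Fin M × Fin n) (Fin M × Fin m) ℝ)
    (Cstar : Matrix (Fin M × Fin l) (Fin M × Fin n) ℝ)
    (Dstar : Matrix (Fin M × Fin l) (Fin M × Fin m) ℝ) :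
    ℕ → Matrix (Fin M × Fin l) (Fin M × Fin m) ℝ
  | 0 => Dstar
  | (i + 1) => Cstar * Astar ^ i * Bstar

/-! Say a block matrix has offset `d` if its only nonzero blocks sit at positions `(j + d, j)`:
block diagonal is offset `0`, cyclic is offset `1`. Offsets add under multiplication, and the
inverse of a block diagonal matrix is block diagonal (it is its own block diagonal part).
Expanding `T⁻¹`, the matrix `W k := T⁻¹ A*^k B* S_m^(k+1)` is a sum of terms
`F̌ j (S_l^j Ȟ*(j+k+1) S_m^(k+1))`, so it is block diagonal, and hence so is `Y = ∑ W j Ǧ j`.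
Now `(T⁻¹ A* T) W k = W (k+1) S_mᵀ` has offset `1` and `(C* T) W k = Ȟ*(k+1) S_m^(k+1)` has
offset `0`, so `(T⁻¹ A* T) Y` and `(C* T) Y` have these offsets, and cancelling the invertible
block diagonal `Y` transfers them to `T⁻¹ A* T` and `C* T`. Finally `T⁻¹ B* = W 0 S_mᵀ` and
`D* = Ȟ*(0)`. -/

section BlockOffset

variable {M : ℕ} {R : Type*} {p q r : ℕ}

def IsBlockOffset [Zero R] (d : Fin M) (K : Matrix (Fin M × Fin p) (Fin M × Fin q) R) : Prop :=
  ∀ i j : Fin M, i ≠ j + d → ∀ s t, K (i, s) (j, t) = 0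

theorem isBlockOffset_zero_iff_isBlockDiag [NeZero M]
    {K : Matrix (Fin M × Fin p) (Fin M × Fin q) ℝ} :
    IsBlockOffset 0 K ↔ IsBlockDiag K := by
  simp only [IsBlockOffset, IsBlockDiag, add_zero]

theorem isBlockOffset_one_iff_isCyclicMat [NeZero M]
    {K : Matrix (Fin M × Fin p) (Fin M × Fin q) ℝ} :
    IsBlockOffset 1 K ↔ IsCyclicMat K :=
  Iff.rfl

theorem IsBlockOffset.mul [NonUnitalNonAssocSemiring R] {d e : Fin M}
    {K : Matrix (Fin M × Fin p) (Fin M × Fin q) R} {L : Matrix (Fin M × Fin q) (Fin M × Fin r) R}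
    (hK : IsBlockOffset d K) (hL : IsBlockOffset e L) : IsBlockOffset (e + d) (K * L) := by
  intro i j hij s t
  rw [mul_apply]
  refine Finset.sum_eq_zero ?_
  rintro ⟨k, u⟩ -
  by_cases hik : i = k + d
  · have hkj : k ≠ j + e := by
      rintro rfl
      exact hij (by rw [hik, add_assoc])
    rw [hL k j hkj u t, mul_zero]
  · rw [hK i k hik s u, zero_mul]

theorem IsBlockOffset.sum [AddCommMonoid R] {d : Fin M} {ι : Type*} {s : Finset ι}
    {f : ι → Matrix (Fin M × Fin p) (Fin M × Fin q) R} (h : ∀ i ∈ s, IsBlockOffset d (f i)) :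
    IsBlockOffset d (∑ i ∈ s, f i) := by
  intro i j hij u t
  rw [Matrix.sum_apply]
  exact Finset.sum_eq_zero fun k hk => h k hk i j hij u t

theorem isBlockOffset_bdiagOf [NeZero M] (Ds : Fin M → Matrix (Fin p) (Fin q) ℝ) :
    IsBlockOffset 0 (bdiagOf Ds) := by
  intro i j hij s t
  simp only [bdiagOf, add_zero] at hij ⊢
  exact if_neg hij

theorem isBlockOffset_transpose_cycShift [NeZero M] :
    IsBlockOffset (1 : Fin M) (cycShift M q)ᵀ := by
  intro i j hij s t
  simp only [cycShift, transpose_apply]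
  exact if_neg fun h => hij h.1

theorem cycShift_eq_permMatrix [NeZero M] : cycShift M q =
    Equiv.Perm.permMatrix ℝ ((Equiv.addRight (1 : Fin M)).prodCongr (Equiv.refl (Fin q))) := by
  ext a b
  simp [cycShift, Prod.ext_iff, eq_comm]

theorem cycShift_mul_transpose [NeZero M] : cycShift M q * (cycShift M q)ᵀ = 1 := by
  rw [cycShift_eq_permMatrix, transpose_permMatrix, ← permMatrix_mul, inv_mul_cancel,
    permMatrix_one]

def blockDiagPart [Zero R] (K : Matrix (Fin M × Fin p) (Fin M × Fin p) R) :
    Matrix (Fin M × Fin p) (Fin M × Fin p) R :=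
  fun a b => if a.1 = b.1 then K a b else 0

theorem isBlockOffset_blockDiagPart [NeZero M] [Zero R]
    (K : Matrix (Fin M × Fin p) (Fin M × Fin p) R) :
    IsBlockOffset 0 (blockDiagPart K) := by
  intro i j hij s t
  simp only [blockDiagPart, add_zero] at hij ⊢
  exact if_neg hij

theorem blockDiagPart_mul_of_isBlockOffset_zero [NeZero M] [NonUnitalNonAssocSemiring R]
    {X Y : Matrix (Fin M × Fin p) (Fin M × Fin p) R} (hY : IsBlockOffset 0 Y) :
    blockDiagPart X * Y = blockDiagPart (X * Y) := by
  ext a b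
  simp only [blockDiagPart, mul_apply]
  have hterm : ∀ c, (if a.1 = c.1 then X a c else 0) * Y c b =
      if a.1 = b.1 then X a c * Y c b else 0 := by
    intro c
    by_cases hcb : c.1 = b.1
    · simp only [hcb, ite_mul, zero_mul]
    · simp only [hY c.1 b.1 (by simpa using hcb) c.2 b.2, mul_zero, ite_self]
  rw [Finset.sum_congr rfl fun c _ => hterm c, Finset.sum_ite_irrel, Finset.sum_const_zero]

theorem blockDiagPart_one [NonAssocSemiring R] :
    blockDiagPart (1 : Matrix (Fin M × Fin p) (Fin M × Fin p) R) = 1 := by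
  ext a b
  by_cases hab : a.1 = b.1
  · simp only [blockDiagPart, if_pos hab]
  · simp only [blockDiagPart, if_neg hab]
    exact (one_apply_ne fun h => hab (congrArg Prod.fst h)).symm

theorem IsBlockOffset.nonsing_inv [NeZero M] [CommRing R]
    {Y : Matrix (Fin M × Fin p) (Fin M × Fin p) R} (hY : IsBlockOffset 0 Y) :
    IsBlockOffset 0 Y⁻¹ := by
  by_cases hdet : IsUnit Y.det
  · have hleft : blockDiagPart Y⁻¹ * Y = 1 := by
      rw [blockDiagPart_mul_of_isBlockOffset_zero hY, nonsing_inv_mul Y hdet, blockDiagPart_one]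
    rw [inv_eq_left_inv hleft]
    exact isBlockOffset_blockDiagPart _
  · rw [nonsing_inv_apply_not_isUnit Y hdet]
    exact fun _ _ _ _ _ => rfl

theorem IsBlockOffset.of_mul_right [NeZero M] [CommRing R] {d : Fin M}
    {X : Matrix (Fin M × Fin q) (Fin M × Fin p) R} {Y : Matrix (Fin M × Fin p) (Fin M × Fin p) R}
    (hY : IsUnit Y) (hY0 : IsBlockOffset 0 Y) (hXY : IsBlockOffset d (X * Y)) :
    IsBlockOffset d X := by
  rw [← mul_nonsing_inv_cancel_right Y X ((isUnit_iff_isUnit_det Y).mp hY)]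
  simpa only [zero_add] using hXY.mul hY0.nonsing_inv

theorem IsBlockOffset.of_mul_sum [NeZero M] [CommRing R] {d : Fin M} {ι : Type*} {s : Finset ι}
    {X : Matrix (Fin M × Fin q) (Fin M × Fin p) R}
    {W : ι → Matrix (Fin M × Fin p) (Fin M × Fin r) R}
    {G : ι → Matrix (Fin M × Fin r) (Fin M × Fin p) R}
    (hY : IsUnit (∑ j ∈ s, W j * G j)) (hW : ∀ j ∈ s, IsBlockOffset 0 (W j))
    (hG : ∀ j ∈ s, IsBlockOffset 0 (G j)) (hXW : ∀ j ∈ s, IsBlockOffset d (X * W j)) :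
    IsBlockOffset d X := by
  have hY0 : IsBlockOffset 0 (∑ j ∈ s, W j * G j) :=
    IsBlockOffset.sum fun j hj => by simpa only [add_zero] using (hW j hj).mul (hG j hj)
  refine IsBlockOffset.of_mul_right hY hY0 ?_
  rw [Matrix.mul_sum]
  exact IsBlockOffset.sum fun j hj => by
    simpa only [Matrix.mul_assoc, zero_add] using (hXW j hj).mul (hG j hj)

end BlockOffset

section StateSpace

variable {M n m l : ℕ} [NeZero M]
  {Astar : Matrix (Fin M × Fin n) (Fin M × Fin n) ℝ}
  {Bstar : Matrix (Fin M × Fin n) (Fin M × Fin m) ℝ}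
  {Cstar : Matrix (Fin M × Fin l) (Fin M × Fin n) ℝ}
  {Dstar : Matrix (Fin M × Fin l) (Fin M × Fin m) ℝ}

theorem isBlockOffset_shift_markov (hH : ∀ i j : ℕ, IsBlockDiag
      ((cycShift M l) ^ i * markovSS Astar Bstar Cstar Dstar (i + j) * (cycShift M m) ^ j))
    (i k : ℕ) : IsBlockOffset 0
      ((cycShift M l) ^ i * (Cstar * Astar ^ (i + k) * Bstar) * (cycShift M m) ^ (k + 1)) :=
  isBlockOffset_zero_iff_isBlockDiag.2 (hH i (k + 1))

theorem isBlockOffset_observer_mul (hH : ∀ i j : ℕ, IsBlockDiag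
      ((cycShift M l) ^ i * markovSS Astar Bstar Cstar Dstar (i + j) * (cycShift M m) ^ j))
    (Fs : Fin n → Matrix (Fin n) (Fin l) ℝ) (k : ℕ) : IsBlockOffset 0
      ((∑ j : Fin n, bdiagOf (fun _ : Fin M => Fs j) * (cycShift M l) ^ (j : ℕ) * Cstar *
        Astar ^ (j : ℕ)) * Astar ^ k * Bstar * (cycShift M m) ^ (k + 1)) := by
  simp only [Matrix.sum_mul]
  refine IsBlockOffset.sum fun j _ => ?_
  simpa only [pow_add, Matrix.mul_assoc, add_zero] using
    (isBlockOffset_bdiagOf fun _ : Fin M => Fs j).mul (isBlockOffset_shift_markov hH j k)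

theorem conj_mul_observer {Tinv : Matrix (Fin M × Fin n) (Fin M × Fin n) ℝ} (hT : IsUnit Tinv)
    (k : ℕ) : Tinv * Astar * Tinv⁻¹ * (Tinv * Astar ^ k * Bstar * cycShift M m ^ (k + 1)) =
      Tinv * Astar ^ (k + 1) * Bstar * cycShift M m ^ (k + 1 + 1) * (cycShift M m)ᵀ := by
  simp only [pow_succ (cycShift M m) (k + 1), pow_succ' Astar k, Matrix.mul_assoc,
    cycShift_mul_transpose, Matrix.mul_one,
    nonsing_inv_mul_cancel_left _ _ ((isUnit_iff_isUnit_det _).mp hT)]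

end StateSpace

theorem stmt14 (M n m l : ℕ) [NeZero M]
    (Astar : Matrix (Fin M × Fin n) (Fin M × Fin n) ℝ)
    (Bstar : Matrix (Fin M × Fin n) (Fin M × Fin m) ℝ)
    (Cstar : Matrix (Fin M × Fin l) (Fin M × Fin n) ℝ)
    (Dstar : Matrix (Fin M × Fin l) (Fin M × Fin m) ℝ)
    (Fs : Fin n → Matrix (Fin n) (Fin l) ℝ)
    (Gs : Fin n → Matrix (Fin m) (Fin n) ℝ)
    (hH : ∀ i j : ℕ, IsBlockDiag
      ((cycShift M l) ^ i * markovSS Astar Bstar Cstar Dstar (i + j) * (cycShift M m) ^ j))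
    (Tinv : Matrix (Fin M × Fin n) (Fin M × Fin n) ℝ)
    (hTdef : Tinv = ∑ j : Fin n,
      bdiagOf (fun _ : Fin M => Fs j) * (cycShift M l) ^ (j : ℕ) * Cstar * Astar ^ (j : ℕ))
    (hT : IsUnit Tinv)
    (Y : Matrix (Fin M × Fin n) (Fin M × Fin n) ℝ)
    (hYdef : Y = ∑ j : Fin n,
      Tinv * Astar ^ (j : ℕ) * Bstar * (cycShift M m) ^ ((j : ℕ) + 1) * bdiagOf (fun _ => Gs j))
    (hY : IsUnit Y) :
    IsCyclicMat (Tinv * Astar * Tinv⁻¹) ∧ IsCyclicMat (Tinv * Bstar) ∧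
    IsBlockDiag (Cstar * Tinv⁻¹) ∧ IsBlockDiag Dstar := by
  have hW : ∀ k : ℕ, IsBlockOffset 0 (Tinv * Astar ^ k * Bstar * cycShift M m ^ (k + 1)) :=
    fun k => by rw [hTdef]; exact isBlockOffset_observer_mul hH Fs k
  have hG : ∀ j : Fin n, IsBlockOffset 0 (bdiagOf fun _ : Fin M => Gs j) :=
    fun j => isBlockOffset_bdiagOf _
  subst hYdef
  refine ⟨?_, ?_, ?_, ?_⟩
  · refine isBlockOffset_one_iff_isCyclicMat.1 <|
      IsBlockOffset.of_mul_sum hY (fun j _ => hW j) (fun j _ => hG j) fun j _ => ?_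
    rw [conj_mul_observer hT]
    simpa only [add_zero] using (hW (j + 1)).mul isBlockOffset_transpose_cycShift
  · have hB : Tinv * Bstar =
        Tinv * Astar ^ 0 * Bstar * cycShift M m ^ (0 + 1) * (cycShift M m)ᵀ := by
      rw [pow_zero, Matrix.mul_one, zero_add, pow_one, Matrix.mul_assoc, cycShift_mul_transpose,
        Matrix.mul_one]
    rw [hB, ← isBlockOffset_one_iff_isCyclicMat]
    simpa only [add_zero] using (hW 0).mul isBlockOffset_transpose_cycShift
  · refine isBlockOffset_zero_iff_isBlockDiag.1 <|
      IsBlockOffset.of_mul_sum hY (fun j _ => hW j) (fun j _ => hG j) fun j _ => ?_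
    simpa only [pow_zero, Matrix.one_mul, zero_add, Matrix.mul_assoc,
      nonsing_inv_mul_cancel_left _ _ ((isUnit_iff_isUnit_det _).mp hT)]
      using isBlockOffset_shift_markov hH 0 j
  · simpa [markovSS] using hH 0 0
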